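/- For every probability mass function π on Ω and every upper set I ⊆ Γ (with respect to ⪯_Γ), μ_π(I) − ν_π(I) = Φ_π(I^c × I) ≥ 0; in particular the benchmark sample-path law μ_π stochastically dominates the distancing sample-path law ν_π. -/

import Mathlib

open Finset Filter Topology Matrix

noncomputable section

/-- Awareness information received by node `i`: a weighted combination of the fraction of
infected social-network neighbors and the global fraction of infected nodes. -/
def infoAwareness (n : ℕ) (GI : SimpleGraph (Fin n)) [DecidableRel GI.Adj]
    (α : ℝ) (x : Fin n → ℝ) (i : Fin n) : ℝ :=
  (α / ((GI.neighborFinset i).card : ℝ)) * ∑ j ∈ GI.neighborFinset i, x j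
    + ((1 - α) / (n : ℝ)) * ∑ j, x j

/-- Social distancing action of node `i`. -/
def distAction (n : ℕ) (GI : SimpleGraph (Fin n)) [DecidableRel GI.Adj]
    (α : ℝ) (x : Fin n → ℝ) (i : Fin n) : ℝ :=
  1 - infoAwareness n GI α x i

/-- Benchmark susceptible-to-infected probability `p01_i(x)`. -/
def p01Bench (n : ℕ) (GC : SimpleGraph (Fin n)) [DecidableRel GC.Adj]
    (β : ℝ) (x : Fin n → ℝ) (i : Fin n) : ℝ :=
  1 - ∏ j ∈ GC.neighborFinset i, (1 - β * x j)

/-- Distancing susceptible-to-infected probability `p01d_i(x)`. -/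
def p01Dist (n : ℕ) (GC GI : SimpleGraph (Fin n)) [DecidableRel GC.Adj] [DecidableRel GI.Adj]
    (α β : ℝ) (x : Fin n → ℝ) (i : Fin n) : ℝ :=
  1 - ∏ j ∈ GC.neighborFinset i, (1 - β * distAction n GI α x i * x j)

/-- Distancing mean-field map `φ`. -/
def phiMap (n : ℕ) (GC GI : SimpleGraph (Fin n)) [DecidableRel GC.Adj] [DecidableRel GI.Adj]
    (α β δ : ℝ) (x : Fin n → ℝ) (i : Fin n) : ℝ :=
  (1 - δ) * x i + (1 - (1 - δ) * x i) * p01Dist n GC GI α β x i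

/-- Benchmark mean-field map `ψ`. -/
def psiMap (n : ℕ) (GC : SimpleGraph (Fin n)) [DecidableRel GC.Adj]
    (β δ : ℝ) (x : Fin n → ℝ) (i : Fin n) : ℝ :=
  (1 - δ) * x i + (1 - (1 - δ) * x i) * p01Bench n GC β x i

end

/-- A probability mass function on a countable (or arbitrary) type. -/
def IsPMF {X : Type*} (p : X → ℝ) : Prop := (∀ x, 0 ≤ p x) ∧ HasSum p 1

/-- `p` is a monotone coupling of the probability mass functions `p1` and `p2` on the
partially ordered set `X`: it is a pmf on `X × X` vanishing off `{(x,y) : x ⪯ y}` whose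
first marginal is `p1` and second marginal is `p2`. -/
def IsMonotoneCoupling {X : Type*} [PartialOrder X] (p : X × X → ℝ) (p1 p2 : X → ℝ) : Prop :=
  IsPMF p ∧ IsPMF p1 ∧ IsPMF p2 ∧
  (∀ x y : X, ¬ x ≤ y → p (x, y) = 0) ∧
  (∀ x, ∑' y, p (x, y) = p1 x) ∧
  (∀ y, ∑' x, p (x, y) = p2 y)

noncomputable section

/-- Embedding of a binary epidemic state into `[0,1]^n`. -/
def stateVec (n : ℕ) (s : Fin n → Bool) : Fin n → ℝ := fun j => if s j then 1 else 0

/-- Benchmark node-level transition probabilities `ℙ_i(s, ·)` on `{0,1}`. -/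
def nodeBench (n : ℕ) (GC : SimpleGraph (Fin n)) [DecidableRel GC.Adj] (β δ : ℝ)
    (s : Fin n → Bool) (i : Fin n) : Bool → ℝ := fun b =>
  if s i then
    (if b then 1 - δ * (1 - p01Bench n GC β (stateVec n s) i)
     else δ * (1 - p01Bench n GC β (stateVec n s) i))
  else
    (if b then p01Bench n GC β (stateVec n s) i
     else 1 - p01Bench n GC β (stateVec n s) i)

/-- Distancing node-level transition probabilities `ℙ_i^d(s, ·)` on `{0,1}`. -/
def nodeDist (n : ℕ) (GC GI : SimpleGraph (Fin n)) [DecidableRel GC.Adj] [DecidableRel GI.Adj]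
    (α β δ : ℝ) (s : Fin n → Bool) (i : Fin n) : Bool → ℝ := fun b =>
  if s i then
    (if b then 1 - δ * (1 - p01Dist n GC GI α β (stateVec n s) i)
     else δ * (1 - p01Dist n GC GI α β (stateVec n s) i))
  else
    (if b then p01Dist n GC GI α β (stateVec n s) i
     else 1 - p01Dist n GC GI α β (stateVec n s) i)

/-- Benchmark Markov transition matrix `K(s,s') = ∏ i, ℙ_i(s, s'_i)`. -/
def Kbench (n : ℕ) (GC : SimpleGraph (Fin n)) [DecidableRel GC.Adj] (β δ : ℝ)
    (s s' : Fin n → Bool) : ℝ := ∏ i, nodeBench n GC β δ s i (s' i)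

/-- Distancing Markov transition matrix `K_d(s,s') = ∏ i, ℙ_i^d(s, s'_i)`. -/
def Kdist (n : ℕ) (GC GI : SimpleGraph (Fin n)) [DecidableRel GC.Adj] [DecidableRel GI.Adj]
    (α β δ : ℝ) (s s' : Fin n → Bool) : ℝ := ∏ i, nodeDist n GC GI α β δ s i (s' i)

/-- Node-level coupling `φ_i^{x,y}` of `ℙ_i^d(x,·)` and `ℙ_i(y,·)`, for `x ⪯ y`.
(The case `x_i = 1, y_i = 0` cannot occur when `x ⪯ y`; it is assigned `0`.) -/
def nodeCouple (n : ℕ) (GC GI : SimpleGraph (Fin n)) [DecidableRel GC.Adj] [DecidableRel GI.Adj]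
    (α β δ : ℝ) (x y : Fin n → Bool) (i : Fin n) : Bool × Bool → ℝ := fun ab =>
  match x i, y i, ab.1, ab.2 with
  | true, true, false, false =>
      δ * (1 - p01Bench n GC β (stateVec n y) i)
  | true, true, false, true =>
      δ * (p01Bench n GC β (stateVec n y) i - p01Dist n GC GI α β (stateVec n x) i)
  | true, true, true, false => 0
  | true, true, true, true =>
      1 - δ * (1 - p01Dist n GC GI α β (stateVec n x) i)
  | false, false, false, false =>
      1 - p01Bench n GC β (stateVec n y) i
  | false, false, false, true =>
      p01Bench n GC β (stateVec n y) i - p01Dist n GC GI α β (stateVec n x) i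
  | false, false, true, false => 0
  | false, false, true, true =>
      p01Dist n GC GI α β (stateVec n x) i
  | false, true, false, false =>
      δ * (1 - p01Bench n GC β (stateVec n y) i)
  | false, true, false, true =>
      1 - p01Dist n GC GI α β (stateVec n x) i - δ * (1 - p01Bench n GC β (stateVec n y) i)
  | false, true, true, false => 0
  | false, true, true, true =>
      p01Dist n GC GI α β (stateVec n x) i
  | true, false, _, _ => 0

/-- State-level coupling `φ^{x,y}(ω,ω') = ∏ i, φ_i^{x,y}(ω_i, ω'_i)`. -/
def stateCouple (n : ℕ) (GC GI : SimpleGraph (Fin n)) [DecidableRel GC.Adj] [DecidableRel GI.Adj]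
    (α β δ : ℝ) (x y : Fin n → Bool) (ω ω' : Fin n → Bool) : ℝ :=
  ∏ i, nodeCouple n GC GI α β δ x y i (ω i, ω' i)

end

noncomputable section

/-- The all-susceptible state. -/
def allSusc (n : ℕ) : Fin n → Bool := fun _ => false

/-- A sample path: a trajectory of states with positive benchmark transition
probabilities that reaches the all-susceptible absorbing state in finite time. -/
def IsSamplePath (n : ℕ) (GC : SimpleGraph (Fin n)) [DecidableRel GC.Adj] (β δ : ℝ)
    (g : ℕ → Fin n → Bool) : Prop :=
  (∀ t, 0 < Kbench n GC β δ (g t) (g (t + 1))) ∧ ∃ T, g T = allSusc n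

/-- The set `Γ` of sample paths, as a subtype (partially ordered pointwise). -/
abbrev SamplePath (n : ℕ) (GC : SimpleGraph (Fin n)) [DecidableRel GC.Adj] (β δ : ℝ) :=
  {g : ℕ → Fin n → Bool // IsSamplePath n GC β δ g}

/-- Absorption time `T(g) = min {t : g^t = 0}`. -/
def absTime (n : ℕ) (GC : SimpleGraph (Fin n)) [DecidableRel GC.Adj] (β δ : ℝ)
    (g : SamplePath n GC β δ) : ℕ :=
  sInf {t | g.1 t = allSusc n}

/-- Benchmark sample-path law `μ_π(g) = π(g⁰)·∏_{t<T(g)} K(gᵗ, gᵗ⁺¹)`. -/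
def muPath (n : ℕ) (GC : SimpleGraph (Fin n)) [DecidableRel GC.Adj] (β δ : ℝ)
    (π : (Fin n → Bool) → ℝ) (g : SamplePath n GC β δ) : ℝ :=
  π (g.1 0) * ∏ t ∈ Finset.range (absTime n GC β δ g), Kbench n GC β δ (g.1 t) (g.1 (t + 1))

/-- Distancing sample-path law `ν_π(g) = π(g⁰)·∏_{t<T(g)} K_d(gᵗ, gᵗ⁺¹)`. -/
def nuPath (n : ℕ) (GC GI : SimpleGraph (Fin n)) [DecidableRel GC.Adj] [DecidableRel GI.Adj]
    (α β δ : ℝ) (π : (Fin n → Bool) → ℝ) (g : SamplePath n GC β δ) : ℝ :=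
  π (g.1 0) * ∏ t ∈ Finset.range (absTime n GC β δ g), Kdist n GC GI α β δ (g.1 t) (g.1 (t + 1))

/-- The coupling `Φ_π` on pairs of sample paths:
`Φ_π(h,g) = 1{h⁰ = g⁰}·π(h⁰)·∏_{t<T(g)} φ^{hᵗ,gᵗ}(hᵗ⁺¹, gᵗ⁺¹)`. -/
def PhiPath (n : ℕ) (GC GI : SimpleGraph (Fin n)) [DecidableRel GC.Adj] [DecidableRel GI.Adj]
    (α β δ : ℝ) (π : (Fin n → Bool) → ℝ)
    (hg : SamplePath n GC β δ × SamplePath n GC β δ) : ℝ :=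
  (if hg.1.1 0 = hg.2.1 0 then (1 : ℝ) else 0) * π (hg.1.1 0) *
    ∏ t ∈ Finset.range (absTime n GC β δ hg.2),
      stateCouple n GC GI α β δ (hg.1.1 t) (hg.2.1 t) (hg.1.1 (t + 1)) (hg.2.1 (t + 1))

end

/-!
The two chains are coupled node by node. Since the distancing action `a_i(x)` lies in `[0,1]`,
`p01d_i(x) ≤ p01_i(y)` whenever `x ⪯ y`; this makes the node couplings `φ_i^{x,y}` nonnegative and
supported on ordered pairs, with marginals `ℙ_i^d(x,·)` and `ℙ_i(y,·)`, and their product `φ^{x,y}`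
inherits all of this. Along paths, summing `Φ_π(h,g)` over `h` gives `μ_π(g)` and summing over `g`
gives `ν_π(h)`, both by induction on the absorption time through a first-step decomposition; the
base case of the second is that the benchmark chain is absorbed at `0_n` with probability one, as
every state jumps to `0_n` with probability bounded away from zero. Since `Φ_π` charges only pairs
`h ⪯ g`, for an upper set `I` one gets `ν_π(I) = Φ_π(I × I)` and
`μ_π(I) = Φ_π(Iᶜ × I) + Φ_π(I × I)`.
-/

open scoped ENNReal

section MonotoneCoupling

variable {α : Type*} [Preorder α]

theorem tsum_upperSet_marginal_eq {p : α × α → ℝ≥0∞} (hp : ∀ a b, p (a, b) ≠ 0 → a ≤ b)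
    {I : Set α} (hI : IsUpperSet I) :
    ∑' b : I, ∑' a, p (a, b) = ∑' x : ↥(Iᶜ ×ˢ I), p x + ∑' a : I, ∑' b, p (a, b) := by
  classical
  have hsnd : ∑' b : I, ∑' a, p (a, b) = ∑' x : α × α, if x.2 ∈ I then p x else 0 := by
    rw [_root_.tsum_subtype I (fun b => ∑' a, p (a, b)), ENNReal.tsum_prod', ENNReal.tsum_comm]
    refine tsum_congr fun b => ?_
    by_cases hb : b ∈ I <;> simp [hb]
  have hfst : ∑' a : I, ∑' b, p (a, b) = ∑' x : α × α, if x.1 ∈ I then p x else 0 := by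
    rw [_root_.tsum_subtype I (fun a => ∑' b, p (a, b)), ENNReal.tsum_prod']
    refine tsum_congr fun a => ?_
    by_cases ha : a ∈ I <;> simp [ha]
  rw [hsnd, hfst, _root_.tsum_subtype, ← ENNReal.tsum_add]
  refine tsum_congr fun ⟨a, b⟩ => ?_
  by_cases hb : b ∈ I
  · by_cases ha : a ∈ I <;> simp [ha, hb, Set.indicator]
  · have hp₀ : a ∈ I → p (a, b) = 0 := fun ha => by_contra fun hne => hb (hI (hp a b hne) ha)
    by_cases ha : a ∈ I <;> simp [ha, hb, hp₀, Set.indicator]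

theorem tsum_eq_toReal_tsum_ofReal {ι : Type*} {f : ι → ℝ} (hf : ∀ i, 0 ≤ f i) :
    ∑' i, f i = (∑' i, ENNReal.ofReal (f i)).toReal := by
  rw [ENNReal.tsum_toReal_eq fun _ => ENNReal.ofReal_ne_top]
  exact tsum_congr fun i => (ENNReal.toReal_ofReal (hf i)).symm

theorem tsum_upperSet_sub_eq_tsum_of_coupling {p : α × α → ℝ} {μ ν : α → ℝ}
    (hp₀ : ∀ x, 0 ≤ p x) (hμ₀ : ∀ b, 0 ≤ μ b) (hν₀ : ∀ a, 0 ≤ ν a)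
    (hp : ∀ a b, p (a, b) ≠ 0 → a ≤ b)
    (hμ : ∀ b, ∑' a, ENNReal.ofReal (p (a, b)) = ENNReal.ofReal (μ b))
    (hν : ∀ a, ∑' b, ENNReal.ofReal (p (a, b)) = ENNReal.ofReal (ν a))
    (hμ₁ : ∑' b, ENNReal.ofReal (μ b) ≠ ∞) {I : Set α} (hI : IsUpperSet I) :
    ∑' b : I, μ b - ∑' a : I, ν a = ∑' x : ↥(Iᶜ ×ˢ I), p x := by
  have key := tsum_upperSet_marginal_eq (p := fun x => ENNReal.ofReal (p x))
    (fun a b h => hp a b fun h0 => h (by simp [h0])) hI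
  simp only [hμ, hν] at key
  have hfin : ∑' b : I, ENNReal.ofReal (μ b) ≠ ∞ :=
    ne_top_of_le_ne_top hμ₁ (ENNReal.tsum_comp_le_tsum_of_injective Subtype.val_injective _)
  rw [key, ENNReal.add_ne_top] at hfin
  rw [tsum_eq_toReal_tsum_ofReal fun b : I => hμ₀ b, tsum_eq_toReal_tsum_ofReal fun a : I => hν₀ a,
    tsum_eq_toReal_tsum_ofReal fun x : ↥(Iᶜ ×ˢ I) => hp₀ x, key, ENNReal.toReal_add hfin.1 hfin.2]
  ring

end MonotoneCoupling

section InfectionProbability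

variable {ι : Type*} {s : Finset ι} {c c' : ι → ℝ}

theorem one_sub_prod_one_sub_mem_Ico (hc : ∀ j ∈ s, c j ∈ Set.Ico (0 : ℝ) 1) :
    1 - ∏ j ∈ s, (1 - c j) ∈ Set.Ico (0 : ℝ) 1 := by
  have hpos : 0 < ∏ j ∈ s, (1 - c j) := prod_pos fun j hj => by linarith [(hc j hj).2]
  have hle : ∏ j ∈ s, (1 - c j) ≤ 1 :=
    prod_le_one (fun j hj => by linarith [(hc j hj).2]) fun j hj => by linarith [(hc j hj).1]
  constructor <;> linarith

theorem one_sub_prod_one_sub_le_of_le (hcc' : ∀ j ∈ s, c j ≤ c' j) (hc' : ∀ j ∈ s, c' j ≤ 1) :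
    1 - ∏ j ∈ s, (1 - c j) ≤ 1 - ∏ j ∈ s, (1 - c' j) := by
  have := prod_le_prod (s := s) (fun j hj => sub_nonneg.2 (hc' j hj))
    fun j hj => sub_le_sub_left (hcc' j hj) 1
  linarith

-- Also for `s = ∅`, where the quotient is `0 / 0 = 0`.
theorem sum_div_card_mem_Icc (s : Finset ι) {x : ι → ℝ} (hx : ∀ j, x j ∈ Set.Icc (0 : ℝ) 1) :
    (∑ j ∈ s, x j) / #s ∈ Set.Icc (0 : ℝ) 1 :=
  ⟨div_nonneg (sum_nonneg fun j _ => (hx j).1) (Nat.cast_nonneg _),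
    div_le_one_of_le₀ ((sum_le_card_nsmul s x 1 fun j _ => (hx j).2).trans (by simp))
      (Nat.cast_nonneg _)⟩

variable {n : ℕ} {GC GI : SimpleGraph (Fin n)} [DecidableRel GC.Adj] [DecidableRel GI.Adj]
  {α β : ℝ} {x y : Fin n → ℝ}

theorem infoAwareness_mem_Icc (hα : α ∈ Set.Icc (0 : ℝ) 1) (hx : ∀ j, x j ∈ Set.Icc (0 : ℝ) 1)
    (i : Fin n) : infoAwareness n GI α x i ∈ Set.Icc (0 : ℝ) 1 := by
  have hnbr := sum_div_card_mem_Icc (GI.neighborFinset i) hx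
  have hall := sum_div_card_mem_Icc (univ : Finset (Fin n)) hx
  rw [card_univ, Fintype.card_fin] at hall
  rw [infoAwareness, div_mul_eq_mul_div, mul_div_assoc, div_mul_eq_mul_div, mul_div_assoc]
  constructor <;> nlinarith [hnbr.1, hnbr.2, hall.1, hall.2, hα.1, hα.2]

theorem distAction_mem_Icc (hα : α ∈ Set.Icc (0 : ℝ) 1) (hx : ∀ j, x j ∈ Set.Icc (0 : ℝ) 1)
    (i : Fin n) : distAction n GI α x i ∈ Set.Icc (0 : ℝ) 1 := by
  have := infoAwareness_mem_Icc (GI := GI) hα hx i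
  exact ⟨sub_nonneg.2 this.2, sub_le_self _ this.1⟩

theorem p01Bench_mem_Ico (hβ : β ∈ Set.Ioo (0 : ℝ) 1) (hx : ∀ j, x j ∈ Set.Icc (0 : ℝ) 1)
    (i : Fin n) : p01Bench n GC β x i ∈ Set.Ico (0 : ℝ) 1 :=
  one_sub_prod_one_sub_mem_Ico fun j _ => ⟨mul_nonneg hβ.1.le (hx j).1,
    (mul_le_of_le_one_right hβ.1.le (hx j).2).trans_lt hβ.2⟩

theorem p01Dist_mem_Ico (hα : α ∈ Set.Icc (0 : ℝ) 1) (hβ : β ∈ Set.Ioo (0 : ℝ) 1)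
    (hx : ∀ j, x j ∈ Set.Icc (0 : ℝ) 1) (i : Fin n) :
    p01Dist n GC GI α β x i ∈ Set.Ico (0 : ℝ) 1 := by
  obtain ⟨ha₀, ha₁⟩ := distAction_mem_Icc (GI := GI) hα hx i
  refine one_sub_prod_one_sub_mem_Ico fun j _ => ⟨?_, ?_⟩
  · exact mul_nonneg (mul_nonneg hβ.1.le ha₀) (hx j).1
  · nlinarith [mul_nonneg (mul_nonneg hβ.1.le ha₀) (sub_nonneg.2 (hx j).2),
      mul_nonneg hβ.1.le (sub_nonneg.2 ha₁), hβ.2]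

theorem p01Dist_le_p01Bench (hα : α ∈ Set.Icc (0 : ℝ) 1) (hβ : β ∈ Set.Ioo (0 : ℝ) 1)
    (hx : ∀ j, x j ∈ Set.Icc (0 : ℝ) 1) (hy : ∀ j, y j ∈ Set.Icc (0 : ℝ) 1) (hxy : x ≤ y)
    (i : Fin n) : p01Dist n GC GI α β x i ≤ p01Bench n GC β y i := by
  obtain ⟨ha₀, ha₁⟩ := distAction_mem_Icc (GI := GI) hα hx i
  refine one_sub_prod_one_sub_le_of_le (fun j _ => ?_)
    fun j _ => (mul_le_of_le_one_right hβ.1.le (hy j).2).trans hβ.2.le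
  nlinarith [mul_nonneg (mul_nonneg hβ.1.le (hx j).1) (sub_nonneg.2 ha₁),
    mul_le_mul_of_nonneg_left (hxy j) hβ.1.le]

theorem stateVec_mem_Icc (s : Fin n → Bool) (j : Fin n) : stateVec n s j ∈ Set.Icc (0 : ℝ) 1 := by
  unfold stateVec; split <;> norm_num

theorem stateVec_mono {s s' : Fin n → Bool} (h : s ≤ s') : stateVec n s ≤ stateVec n s' :=
  fun j => by
    have := h j
    unfold stateVec
    cases hs : s j <;> cases hs' : s' j <;> simp_all [Bool.le_iff_imp]

@[simp] theorem stateVec_allSusc : stateVec n (allSusc n) = 0 := by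
  funext j; simp [stateVec, allSusc]

@[simp] theorem p01Bench_zero (i : Fin n) : p01Bench n GC β 0 i = 0 := by simp [p01Bench]

@[simp] theorem p01Dist_zero (i : Fin n) : p01Dist n GC GI α β 0 i = 0 := by simp [p01Dist]

end InfectionProbability

section Coupling

variable {n : ℕ} {GC GI : SimpleGraph (Fin n)} [DecidableRel GC.Adj] [DecidableRel GI.Adj]
  {α β δ : ℝ} {x y s a b : Fin n → Bool} {i : Fin n}

theorem nodeBench_nonneg (hβ : β ∈ Set.Ioo (0 : ℝ) 1) (hδ : δ ∈ Set.Ioo (0 : ℝ) 1)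
    (s : Fin n → Bool) (i : Fin n) (c : Bool) : 0 ≤ nodeBench n GC β δ s i c := by
  obtain ⟨hq₀, hq₁⟩ := p01Bench_mem_Ico (GC := GC) hβ (stateVec_mem_Icc s) i
  unfold nodeBench
  cases s i <;> cases c <;> simp only [Bool.false_eq_true, ↓reduceIte] <;>
    nlinarith [hδ.1, hδ.2, mul_nonneg hδ.1.le hq₀]

theorem nodeBench_false_pos (hβ : β ∈ Set.Ioo (0 : ℝ) 1) (hδ : δ ∈ Set.Ioo (0 : ℝ) 1)
    (s : Fin n → Bool) (i : Fin n) : 0 < nodeBench n GC β δ s i false := by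
  obtain ⟨hq₀, hq₁⟩ := p01Bench_mem_Ico (GC := GC) hβ (stateVec_mem_Icc s) i
  unfold nodeBench
  cases s i
  · simpa using hq₁
  · simpa using mul_pos hδ.1 (sub_pos.2 hq₁)

theorem sum_nodeBench (s : Fin n → Bool) (i : Fin n) : ∑ c, nodeBench n GC β δ s i c = 1 := by
  simp only [Fintype.sum_bool, nodeBench]
  cases s i <;> simp

theorem nodeCouple_true_false (x y : Fin n → Bool) (i : Fin n) :
    nodeCouple n GC GI α β δ x y i (true, false) = 0 := by
  unfold nodeCouple
  cases x i <;> cases y i <;> rfl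

theorem nodeCouple_of_not_le (h : ¬x i ≤ y i) (ab : Bool × Bool) :
    nodeCouple n GC GI α β δ x y i ab = 0 := by
  unfold nodeCouple
  cases hx : x i <;> cases hy : y i <;> simp_all [Bool.le_iff_imp]

theorem sum_nodeCouple_left (hxy : x i ≤ y i) (c : Bool) :
    ∑ a, nodeCouple n GC GI α β δ x y i (a, c) = nodeBench n GC β δ y i c := by
  simp only [Fintype.sum_bool, nodeCouple, nodeBench]
  cases hx : x i <;> cases hy : y i <;> cases c <;> simp_all [Bool.le_iff_imp] <;> ring

theorem sum_nodeCouple_right (hxy : x i ≤ y i) (c : Bool) :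
    ∑ b, nodeCouple n GC GI α β δ x y i (c, b) = nodeDist n GC GI α β δ x i c := by
  simp only [Fintype.sum_bool, nodeCouple, nodeDist]
  cases hx : x i <;> cases hy : y i <;> cases c <;> simp_all [Bool.le_iff_imp]
  ring

theorem nodeCouple_nonneg (hα : α ∈ Set.Icc (0 : ℝ) 1) (hβ : β ∈ Set.Ioo (0 : ℝ) 1)
    (hδ : δ ∈ Set.Ioo (0 : ℝ) 1) (hxy : x ≤ y) (i : Fin n) (ab : Bool × Bool) :
    0 ≤ nodeCouple n GC GI α β δ x y i ab := by
  obtain ⟨hq₀, hq₁⟩ := p01Bench_mem_Ico (GC := GC) hβ (stateVec_mem_Icc y) i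
  obtain ⟨hd₀, -⟩ := p01Dist_mem_Ico (GC := GC) (GI := GI) hα hβ (stateVec_mem_Icc x) i
  have hdq := p01Dist_le_p01Bench (GC := GC) (GI := GI) hα hβ (stateVec_mem_Icc x)
    (stateVec_mem_Icc y) (stateVec_mono hxy) i
  obtain ⟨a, b⟩ := ab
  unfold nodeCouple
  cases x i <;> cases y i <;> cases a <;> cases b <;> dsimp only <;>
    nlinarith [hδ.1, hδ.2, mul_nonneg hδ.1.le hd₀, mul_nonneg hδ.1.le (sub_nonneg.2 hdq),
      mul_nonneg (sub_nonneg.2 hδ.2.le) (sub_nonneg.2 hq₁.le)]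

theorem nodeBench_pos_of_nodeCouple_ne_zero (hα : α ∈ Set.Icc (0 : ℝ) 1)
    (hβ : β ∈ Set.Ioo (0 : ℝ) 1) (hδ : δ ∈ Set.Ioo (0 : ℝ) 1) (hxy : x ≤ y) {c d : Bool}
    (h : nodeCouple n GC GI α β δ x y i (c, d) ≠ 0) :
    0 < nodeBench n GC β δ x i c ∧ 0 < nodeBench n GC β δ y i d := by
  obtain ⟨hqx₀, hqx₁⟩ := p01Bench_mem_Ico (GC := GC) hβ (stateVec_mem_Icc x) i
  obtain ⟨hqy₀, hqy₁⟩ := p01Bench_mem_Ico (GC := GC) hβ (stateVec_mem_Icc y) i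
  obtain ⟨hd₀, -⟩ := p01Dist_mem_Ico (GC := GC) (GI := GI) hα hβ (stateVec_mem_Icc x) i
  have hdx := p01Dist_le_p01Bench (GC := GC) (GI := GI) hα hβ (stateVec_mem_Icc x)
    (stateVec_mem_Icc x) le_rfl i
  have hdy := p01Dist_le_p01Bench (GC := GC) (GI := GI) hα hβ (stateVec_mem_Icc x)
    (stateVec_mem_Icc y) (stateVec_mono hxy) i
  have hxyi := hxy i
  unfold nodeCouple at h
  unfold nodeBench
  cases hx : x i <;> cases hy : y i <;> cases c <;> cases d <;> simp_all [Bool.le_iff_imp]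
  all_goals
    (try refine ⟨?_, ?_⟩) <;>
    first
    | nlinarith [mul_nonneg hδ.1.le hqx₀, mul_nonneg hδ.1.le hqy₀, hδ.2]
    | linarith [lt_of_le_of_ne hd₀ (Ne.symm h)]
    | linarith [lt_of_le_of_ne hdy (Ne.symm (sub_ne_zero.1 h))]

theorem stateCouple_of_not_le (h : ¬x ≤ y) (a b : Fin n → Bool) :
    stateCouple n GC GI α β δ x y a b = 0 := by
  simp only [Pi.le_def, not_forall] at h
  obtain ⟨i, hi⟩ := h
  exact prod_eq_zero (mem_univ i) (nodeCouple_of_not_le hi _)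

theorem le_of_stateCouple_ne_zero (h : stateCouple n GC GI α β δ x y a b ≠ 0) : a ≤ b := by
  intro j
  by_contra hj
  obtain ⟨ha, hb⟩ : a j = true ∧ b j = false := by
    revert hj; cases a j <;> cases b j <;> simp
  exact h (prod_eq_zero (mem_univ j) (by rw [ha, hb]; exact nodeCouple_true_false x y j))

theorem stateCouple_nonneg (hα : α ∈ Set.Icc (0 : ℝ) 1) (hβ : β ∈ Set.Ioo (0 : ℝ) 1)
    (hδ : δ ∈ Set.Ioo (0 : ℝ) 1) (x y a b : Fin n → Bool) :
    0 ≤ stateCouple n GC GI α β δ x y a b := by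
  by_cases hxy : x ≤ y
  · exact prod_nonneg fun i _ => nodeCouple_nonneg hα hβ hδ hxy i _
  · rw [stateCouple_of_not_le hxy]

theorem sum_stateCouple_left (hxy : x ≤ y) (b : Fin n → Bool) :
    ∑ a, stateCouple n GC GI α β δ x y a b = Kbench n GC β δ y b :=
  (Fintype.prod_sum fun i c => nodeCouple n GC GI α β δ x y i (c, b i)).symm.trans
    (prod_congr rfl fun i _ => sum_nodeCouple_left (hxy i) (b i))

theorem sum_stateCouple_right (hxy : x ≤ y) (a : Fin n → Bool) :
    ∑ b, stateCouple n GC GI α β δ x y a b = Kdist n GC GI α β δ x a :=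
  (Fintype.prod_sum fun i c => nodeCouple n GC GI α β δ x y i (a i, c)).symm.trans
    (prod_congr rfl fun i _ => sum_nodeCouple_right (hxy i) (a i))

theorem Kbench_pos_of_stateCouple_ne_zero (hα : α ∈ Set.Icc (0 : ℝ) 1)
    (hβ : β ∈ Set.Ioo (0 : ℝ) 1) (hδ : δ ∈ Set.Ioo (0 : ℝ) 1)
    (h : stateCouple n GC GI α β δ x y a b ≠ 0) :
    0 < Kbench n GC β δ x a ∧ 0 < Kbench n GC β δ y b := by
  have hxy : x ≤ y := by_contra fun hxy => h (stateCouple_of_not_le hxy a b)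
  have hnode := fun i => nodeBench_pos_of_nodeCouple_ne_zero hα hβ hδ hxy
    (prod_ne_zero_iff.1 h i (mem_univ i))
  exact ⟨prod_pos fun i _ => (hnode i).1, prod_pos fun i _ => (hnode i).2⟩

theorem stateCouple_allSusc (y b : Fin n → Bool) :
    stateCouple n GC GI α β δ (allSusc n) y (allSusc n) b = Kbench n GC β δ y b := by
  refine prod_congr rfl fun i _ => ?_
  unfold nodeCouple nodeBench
  cases y i <;> cases b i <;> simp [allSusc]

theorem Kbench_nonneg (hβ : β ∈ Set.Ioo (0 : ℝ) 1) (hδ : δ ∈ Set.Ioo (0 : ℝ) 1)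
    (s s' : Fin n → Bool) : 0 ≤ Kbench n GC β δ s s' :=
  prod_nonneg fun i _ => nodeBench_nonneg hβ hδ s i (s' i)

theorem Kdist_nonneg (hα : α ∈ Set.Icc (0 : ℝ) 1) (hβ : β ∈ Set.Ioo (0 : ℝ) 1)
    (hδ : δ ∈ Set.Ioo (0 : ℝ) 1) (s s' : Fin n → Bool) : 0 ≤ Kdist n GC GI α β δ s s' :=
  sum_stateCouple_right (GC := GC) (GI := GI) (α := α) (β := β) (δ := δ) (le_refl s) s' ▸
    sum_nonneg fun b _ => stateCouple_nonneg hα hβ hδ s s s' b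

theorem sum_Kbench (s : Fin n → Bool) : ∑ s', Kbench n GC β δ s s' = 1 :=
  (Fintype.prod_sum fun i c => nodeBench n GC β δ s i c).symm.trans
    (prod_eq_one fun i _ => sum_nodeBench s i)

theorem Kbench_allSusc_pos (hβ : β ∈ Set.Ioo (0 : ℝ) 1) (hδ : δ ∈ Set.Ioo (0 : ℝ) 1)
    (s : Fin n → Bool) : 0 < Kbench n GC β δ s (allSusc n) :=
  prod_pos fun i _ => nodeBench_false_pos hβ hδ s i

theorem Kbench_allSusc_allSusc : Kbench n GC β δ (allSusc n) (allSusc n) = 1 :=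
  prod_eq_one fun i _ => by simp [nodeBench, allSusc]

theorem eq_allSusc_of_Kbench_ne_zero (h : Kbench n GC β δ (allSusc n) s ≠ 0) : s = allSusc n := by
  funext j
  by_contra hj
  have hsj : s j = true := by simpa [allSusc] using hj
  exact h (prod_eq_zero (mem_univ j) (by simp [nodeBench, allSusc, hsj]))

theorem eq_allSusc_of_le (h : s ≤ allSusc n) : s = allSusc n :=
  le_antisymm h fun _ => Bool.false_le _

end Coupling

namespace SamplePath

variable {n : ℕ} {GC : SimpleGraph (Fin n)} [DecidableRel GC.Adj] {β δ : ℝ}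

theorem apply_succ_eq_allSusc (g : SamplePath n GC β δ) {t : ℕ} (h : g.1 t = allSusc n) :
    g.1 (t + 1) = allSusc n := by
  have := (g.2.1 t).ne'
  rw [h] at this
  exact eq_allSusc_of_Kbench_ne_zero this

theorem apply_eq_allSusc_of_le (g : SamplePath n GC β δ) {t t' : ℕ} (h : g.1 t = allSusc n)
    (ht : t ≤ t') : g.1 t' = allSusc n := by
  induction t', ht using Nat.le_induction with
  | base => exact h
  | succ m _ ih => exact g.apply_succ_eq_allSusc ih

theorem apply_absTime (g : SamplePath n GC β δ) : g.1 (absTime n GC β δ g) = allSusc n :=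
  Nat.sInf_mem g.2.2

theorem absTime_eq_zero_iff (g : SamplePath n GC β δ) :
    absTime n GC β δ g = 0 ↔ g.1 0 = allSusc n :=
  ⟨fun h => h ▸ g.apply_absTime, fun h => Nat.eq_zero_of_le_zero (Nat.sInf_le h)⟩

def tail (g : SamplePath n GC β δ) : SamplePath n GC β δ :=
  ⟨fun t => g.1 (t + 1), fun t => g.2.1 (t + 1), g.2.2.imp fun _ => g.apply_succ_eq_allSusc⟩

theorem absTime_tail_add_one (g : SamplePath n GC β δ) (h : g.1 0 ≠ allSusc n) :
    absTime n GC β δ g.tail + 1 = absTime n GC β δ g :=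
  Nat.sInf_add (Nat.one_le_iff_ne_zero.2 (mt g.absTime_eq_zero_iff.1 h))

theorem prod_range_absTime {M : Type*} [CommMonoid M] (g : SamplePath n GC β δ)
    (h : g.1 0 ≠ allSusc n) (f : ℕ → M) :
    ∏ t ∈ range (absTime n GC β δ g), f t
      = f 0 * ∏ t ∈ range (absTime n GC β δ g.tail), f (t + 1) := by
  rw [← g.absTime_tail_add_one h, prod_range_succ', mul_comm]

theorem ext_tail {g g' : SamplePath n GC β δ} (h₀ : g.1 0 = g'.1 0) (h : g.tail = g'.tail) :
    g = g' :=
  Subtype.ext <| funext fun t => by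
    cases t with
    | zero => exact h₀
    | succ t => exact congrFun (congrArg Subtype.val h) t

theorem tail_induction {P : SamplePath n GC β δ → Prop}
    (base : ∀ g : SamplePath n GC β δ, g.1 0 = allSusc n → P g)
    (step : ∀ g : SamplePath n GC β δ, g.1 0 ≠ allSusc n → P g.tail → P g)
    (g : SamplePath n GC β δ) : P g := by
  induction hT : absTime n GC β δ g generalizing g with
  | zero => exact base g (g.absTime_eq_zero_iff.1 hT)
  | succ N ih =>
    have h₀ : g.1 0 ≠ allSusc n := fun h => by simp [g.absTime_eq_zero_iff.2 h] at hT
    exact step g h₀ (ih g.tail (by have := g.absTime_tail_add_one h₀; omega))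

def absorbed : SamplePath n GC β δ :=
  ⟨fun _ => allSusc n, fun _ => by rw [Kbench_allSusc_allSusc]; exact one_pos, 0, rfl⟩

theorem eq_absorbed (g : SamplePath n GC β δ) (h : g.1 0 = allSusc n) : g = absorbed :=
  Subtype.ext <| funext fun t => g.apply_eq_allSusc_of_le h t.zero_le

def cons (s : Fin n → Bool) (g : SamplePath n GC β δ) (hs : 0 < Kbench n GC β δ s (g.1 0)) :
    SamplePath n GC β δ :=
  ⟨fun t => Nat.casesOn t s g.1,
    fun t => by
      cases t with
      | zero => exact hs
      | succ t => exact g.2.1 t,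
    g.2.2.elim fun T hT => ⟨T + 1, hT⟩⟩

theorem tsum_ite_apply_zero_allSusc (F : SamplePath n GC β δ → ℝ≥0∞) :
    ∑' g : SamplePath n GC β δ, (if g.1 0 = allSusc n then F g else 0) = F absorbed := by
  rw [tsum_eq_single absorbed fun g hg => if_neg (mt g.eq_absorbed hg)]
  exact if_pos rfl

/-- First-step decomposition of a sum over the paths started at `y`. -/
theorem tsum_ite_apply_zero_eq_sum (y : Fin n → Bool) (F D : SamplePath n GC β δ → ℝ≥0∞)
    (c : (Fin n → Bool) → ℝ≥0∞)
    (hF : ∀ g : SamplePath n GC β δ, g.1 0 = y → F g = c (g.1 1) * D g.tail)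
    (hc : ∀ s, c s ≠ 0 → 0 < Kbench n GC β δ y s) :
    ∑' g : SamplePath n GC β δ, (if g.1 0 = y then F g else 0)
      = ∑ s, c s * ∑' g : SamplePath n GC β δ, (if g.1 0 = s then D g else 0) := by
  have hpairs : ∑ s, c s * ∑' g : SamplePath n GC β δ, (if g.1 0 = s then D g else 0)
      = ∑' p : (Fin n → Bool) × SamplePath n GC β δ,
          if p.2.1 0 = p.1 then c p.1 * D p.2 else 0 := by
    rw [ENNReal.tsum_prod', ← tsum_fintype (L := SummationFilter.unconditional _)]
    refine tsum_congr fun s => ?_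
    rw [← ENNReal.tsum_mul_left]
    refine tsum_congr fun g => ?_
    split_ifs <;> simp
  have hstart : ∀ g : SamplePath n GC β δ, (if g.1 0 = y then F g else 0) ≠ 0 → g.1 0 = y :=
    fun g h => by_contra fun hy => h (if_neg hy)
  rw [hpairs]
  symm
  refine tsum_eq_tsum_of_ne_zero_bij (fun g => (g.1.1 1, g.1.tail)) ?_ ?_ ?_
  · rintro ⟨g, hg⟩ ⟨g', hg'⟩ h
    exact Subtype.ext (ext_tail ((hstart g hg).trans (hstart g' hg').symm) (congrArg Prod.snd h))
  · rintro ⟨s, g⟩ hsg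
    rw [Function.mem_support, ne_eq, ite_eq_right_iff, not_forall] at hsg
    obtain ⟨hgs, hne⟩ := hsg
    have hs : 0 < Kbench n GC β δ y (g.1 0) := hgs ▸ hc s (left_ne_zero_of_mul hne)
    refine ⟨⟨cons y g hs, ?_⟩, Prod.ext hgs rfl⟩
    rw [Function.mem_support, if_pos (show (cons y g hs).1 0 = y from rfl), hF _ rfl]
    show c (g.1 0) * D g ≠ 0
    rwa [hgs]
  · rintro ⟨g, hg⟩
    exact (if_pos rfl).trans (hF g (hstart g hg)).symm |>.trans (if_pos (hstart g hg)).symm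

end SamplePath

namespace SamplePath

variable {n : ℕ} {GC : SimpleGraph (Fin n)} [DecidableRel GC.Adj] {β δ : ℝ}

noncomputable def benchWeight (g : SamplePath n GC β δ) : ℝ :=
  ∏ t ∈ range (absTime n GC β δ g), Kbench n GC β δ (g.1 t) (g.1 (t + 1))

variable (GI : SimpleGraph (Fin n)) [DecidableRel GI.Adj] (α : ℝ)

noncomputable def distWeight (h : SamplePath n GC β δ) : ℝ :=
  ∏ t ∈ range (absTime n GC β δ h), Kdist n GC GI α β δ (h.1 t) (h.1 (t + 1))

noncomputable def coupleWeight (h g : SamplePath n GC β δ) : ℝ :=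
  ∏ t ∈ range (absTime n GC β δ g),
    stateCouple n GC GI α β δ (h.1 t) (g.1 t) (h.1 (t + 1)) (g.1 (t + 1))

variable {GI α} {g h : SamplePath n GC β δ}

theorem benchWeight_of_apply_zero (hg : g.1 0 = allSusc n) : g.benchWeight = 1 := by
  rw [benchWeight, g.absTime_eq_zero_iff.2 hg, prod_range_zero]

theorem distWeight_of_apply_zero (hh : h.1 0 = allSusc n) : h.distWeight GI α = 1 := by
  rw [distWeight, h.absTime_eq_zero_iff.2 hh, prod_range_zero]

theorem coupleWeight_of_apply_zero (hg : g.1 0 = allSusc n) : coupleWeight GI α h g = 1 := by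
  rw [coupleWeight, g.absTime_eq_zero_iff.2 hg, prod_range_zero]

theorem benchWeight_of_ne (hg : g.1 0 ≠ allSusc n) :
    g.benchWeight = Kbench n GC β δ (g.1 0) (g.1 1) * g.tail.benchWeight :=
  g.prod_range_absTime hg _

theorem distWeight_of_ne (hh : h.1 0 ≠ allSusc n) :
    h.distWeight GI α = Kdist n GC GI α β δ (h.1 0) (h.1 1) * h.tail.distWeight GI α :=
  h.prod_range_absTime hh _

theorem coupleWeight_of_ne (hg : g.1 0 ≠ allSusc n) :
    coupleWeight GI α h g = stateCouple n GC GI α β δ (h.1 0) (g.1 0) (h.1 1) (g.1 1) *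
      coupleWeight GI α h.tail g.tail :=
  g.prod_range_absTime hg _

theorem le_of_coupleWeight_ne_zero (h₀ : h.1 0 ≤ g.1 0) (hne : coupleWeight GI α h g ≠ 0) :
    h ≤ g := by
  induction g using tail_induction generalizing h with
  | base g hg =>
    have hh : h.1 0 = allSusc n := eq_allSusc_of_le (hg ▸ h₀)
    rw [h.eq_absorbed hh, g.eq_absorbed hg]
  | step g hg ih =>
    rw [coupleWeight_of_ne hg] at hne
    have htail : h.tail ≤ g.tail :=
      ih (le_of_stateCouple_ne_zero (left_ne_zero_of_mul hne)) (right_ne_zero_of_mul hne)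
    intro t
    cases t with
    | zero => exact h₀
    | succ t => exact htail t

end SamplePath

section Absorption

def absorptionProb (n : ℕ) (GC : SimpleGraph (Fin n)) [DecidableRel GC.Adj] (β δ : ℝ) :
    ℕ → (Fin n → Bool) → ℝ
  | 0, s => if s = allSusc n then 1 else 0
  | N + 1, s => ∑ s', Kbench n GC β δ s s' * absorptionProb n GC β δ N s'

variable {n : ℕ} {GC : SimpleGraph (Fin n)} [DecidableRel GC.Adj] {β δ : ℝ}

theorem absorptionProb_allSusc (N : ℕ) : absorptionProb n GC β δ N (allSusc n) = 1 := by
  induction N with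
  | zero => simp [absorptionProb]
  | succ N ih =>
    rw [absorptionProb, ← sum_Kbench (GC := GC) (β := β) (δ := δ) (allSusc n)]
    refine sum_congr rfl fun s _ => ?_
    rcases eq_or_ne (Kbench n GC β δ (allSusc n) s) 0 with h | h
    · rw [h, zero_mul]
    · rw [eq_allSusc_of_Kbench_ne_zero h, ih, mul_one]

theorem absorptionProb_nonneg (hβ : β ∈ Set.Ioo (0 : ℝ) 1) (hδ : δ ∈ Set.Ioo (0 : ℝ) 1)
    (N : ℕ) (s : Fin n → Bool) : 0 ≤ absorptionProb n GC β δ N s := by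
  induction N generalizing s with
  | zero => unfold absorptionProb; split_ifs <;> norm_num
  | succ N ih => exact sum_nonneg fun s' _ => mul_nonneg (Kbench_nonneg hβ hδ s s') (ih s')

theorem absorptionProb_le_one (hβ : β ∈ Set.Ioo (0 : ℝ) 1) (hδ : δ ∈ Set.Ioo (0 : ℝ) 1)
    (N : ℕ) (s : Fin n → Bool) : absorptionProb n GC β δ N s ≤ 1 := by
  induction N generalizing s with
  | zero => unfold absorptionProb; split_ifs <;> norm_num
  | succ N ih =>
    calc absorptionProb n GC β δ (N + 1) s ≤ ∑ s', Kbench n GC β δ s s' * 1 :=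
          sum_le_sum fun s' _ => mul_le_mul_of_nonneg_left (ih s') (Kbench_nonneg hβ hδ s s')
      _ = 1 := by simp [sum_Kbench]

theorem tendsto_absorptionProb (hβ : β ∈ Set.Ioo (0 : ℝ) 1) (hδ : δ ∈ Set.Ioo (0 : ℝ) 1)
    (s : Fin n → Bool) : Tendsto (fun N => absorptionProb n GC β δ N s) atTop (𝓝 1) := by
  obtain ⟨s₀, -, hs₀⟩ := exists_min_image univ (fun s => Kbench n GC β δ s (allSusc n))
    univ_nonempty
  set c := Kbench n GC β δ s₀ (allSusc n)
  have hc₀ : 0 < c := Kbench_allSusc_pos hβ hδ s₀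
  have hc₁ : c ≤ 1 :=
    (single_le_sum (fun s' _ => Kbench_nonneg (GC := GC) hβ hδ s₀ s') (mem_univ _)).trans
      (sum_Kbench s₀).le
  -- each step hits `0_n` with probability at least `c`, whatever the current state
  have hbound : ∀ N s, 1 - (1 - c) ^ N ≤ absorptionProb n GC β δ N s := by
    intro N
    induction N with
    | zero => intro s; simpa using absorptionProb_nonneg hβ hδ 0 s
    | succ N ih =>
      intro s
      have hsplit : absorptionProb n GC β δ (N + 1) s
          = ∑ s', Kbench n GC β δ s s' * (absorptionProb n GC β δ N s' - (1 - (1 - c) ^ N))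
            + (1 - (1 - c) ^ N) := by
        simp only [absorptionProb, mul_sub, sum_sub_distrib, ← sum_mul, sum_Kbench]
        ring
      have hzero : Kbench n GC β δ s (allSusc n) * (1 - c) ^ N
          ≤ ∑ s', Kbench n GC β δ s s' * (absorptionProb n GC β δ N s' - (1 - (1 - c) ^ N)) := by
        simpa [absorptionProb_allSusc] using single_le_sum
          (fun s' _ => mul_nonneg (Kbench_nonneg (GC := GC) hβ hδ s s') (sub_nonneg.2 (ih s')))
          (mem_univ (allSusc n))
      rw [hsplit, pow_succ]
      nlinarith [mul_le_mul_of_nonneg_right (hs₀ s (mem_univ s))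
        (pow_nonneg (sub_nonneg.2 hc₁) N)]
  have hlow : Tendsto (fun N => 1 - (1 - c) ^ N) atTop (𝓝 1) := by
    simpa using
      (tendsto_pow_atTop_nhds_zero_of_lt_one (r := 1 - c) (by linarith) (by linarith)).const_sub 1
  exact tendsto_of_tendsto_of_tendsto_of_le_of_le hlow tendsto_const_nhds (fun N => hbound N s)
    fun N => absorptionProb_le_one hβ hδ N s

namespace SamplePath

theorem tsum_ite_absTime_le (hβ : β ∈ Set.Ioo (0 : ℝ) 1) (hδ : δ ∈ Set.Ioo (0 : ℝ) 1)
    (N : ℕ) (y : Fin n → Bool) :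
    ∑' g : SamplePath n GC β δ, (if g.1 0 = y then
        (if absTime n GC β δ g ≤ N then ENNReal.ofReal g.benchWeight else 0) else 0)
      = ENNReal.ofReal (absorptionProb n GC β δ N y) := by
  have habsorbed : ∀ N, ∑' g : SamplePath n GC β δ, (if g.1 0 = allSusc n then
        (if absTime n GC β δ g ≤ N then ENNReal.ofReal g.benchWeight else 0) else 0)
      = ENNReal.ofReal (absorptionProb n GC β δ N (allSusc n)) := fun N => by
    rw [tsum_ite_apply_zero_allSusc, absorptionProb_allSusc, benchWeight_of_apply_zero rfl,
      if_pos (((absTime_eq_zero_iff _).2 rfl).le.trans N.zero_le), ENNReal.ofReal_one]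
  induction N generalizing y with
  | zero =>
    rcases eq_or_ne y (allSusc n) with rfl | hy
    · exact habsorbed 0
    rw [absorptionProb, if_neg hy, ENNReal.ofReal_zero]
    refine ENNReal.tsum_eq_zero.2 fun g => ?_
    split_ifs with hg hT
    · exact absurd (hg ▸ g.absTime_eq_zero_iff.1 (Nat.le_zero.1 hT)) hy
    all_goals rfl
  | succ N ih =>
    rcases eq_or_ne y (allSusc n) with rfl | hy
    · exact habsorbed _
    rw [tsum_ite_apply_zero_eq_sum y
      (fun g => if absTime n GC β δ g ≤ N + 1 then ENNReal.ofReal g.benchWeight else 0)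
      (fun g => if absTime n GC β δ g ≤ N then ENNReal.ofReal g.benchWeight else 0)
      (fun s => ENNReal.ofReal (Kbench n GC β δ y s)) (fun g hg => ?_)
      (fun s hs => ENNReal.ofReal_pos.1 (pos_iff_ne_zero.2 hs))]
    · simp_rw [ih]
      rw [absorptionProb, ENNReal.ofReal_sum_of_nonneg fun s _ =>
        mul_nonneg (Kbench_nonneg hβ hδ y s) (absorptionProb_nonneg hβ hδ N s)]
      exact sum_congr rfl fun s _ => (ENNReal.ofReal_mul (Kbench_nonneg hβ hδ y s)).symm
    · have hg₀ : g.1 0 ≠ allSusc n := hg ▸ hy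
      rw [← g.absTime_tail_add_one hg₀, benchWeight_of_ne hg₀,
        ENNReal.ofReal_mul (Kbench_nonneg hβ hδ _ _), hg]
      simp only [Nat.add_le_add_iff_right, mul_ite, mul_zero]

theorem tsum_ite_benchWeight (hβ : β ∈ Set.Ioo (0 : ℝ) 1) (hδ : δ ∈ Set.Ioo (0 : ℝ) 1)
    (y : Fin n → Bool) :
    ∑' g : SamplePath n GC β δ, (if g.1 0 = y then ENNReal.ofReal g.benchWeight else 0) = 1 := by
  have htrunc : ∀ N, ∑' g : SamplePath n GC β δ, (if g.1 0 = y then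
        (if absTime n GC β δ g ≤ N then ENNReal.ofReal g.benchWeight else 0) else 0)
      ≤ ∑' g : SamplePath n GC β δ, (if g.1 0 = y then ENNReal.ofReal g.benchWeight else 0) :=
    fun N => ENNReal.tsum_le_tsum fun g => by split_ifs <;> simp
  apply le_antisymm
  · rw [ENNReal.tsum_eq_iSup_sum]
    refine iSup_le fun S => ?_
    calc ∑ g ∈ S, (if g.1 0 = y then ENNReal.ofReal g.benchWeight else 0)
        = ∑ g ∈ S, (if g.1 0 = y then (if absTime n GC β δ g ≤ S.sup (absTime n GC β δ)
            then ENNReal.ofReal g.benchWeight else 0) else 0) :=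
          sum_congr rfl fun g hg => by rw [if_pos (le_sup hg)]
      _ ≤ _ := ENNReal.sum_le_tsum S
      _ = _ := tsum_ite_absTime_le hβ hδ _ y
      _ ≤ 1 := ENNReal.ofReal_le_one.2 (absorptionProb_le_one hβ hδ _ y)
  · have := ENNReal.tendsto_ofReal (tendsto_absorptionProb (GC := GC) hβ hδ y)
    rw [ENNReal.ofReal_one] at this
    exact le_of_tendsto' this fun N => (tsum_ite_absTime_le hβ hδ N y).symm.trans_le (htrunc N)

end SamplePath

end Absorption

section Marginals

theorem sum_ofReal_mul_eq_of_ne_zero {ι : Type*} (s : Finset ι) {a : ι → ℝ} {X : ι → ℝ≥0∞}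
    {Y : ℝ≥0∞} (ha : ∀ i, 0 ≤ a i) (hX : ∀ i, a i ≠ 0 → X i = Y) :
    ∑ i ∈ s, ENNReal.ofReal (a i) * X i = ENNReal.ofReal (∑ i ∈ s, a i) * Y := by
  rw [ENNReal.ofReal_sum_of_nonneg fun i _ => ha i, sum_mul]
  refine sum_congr rfl fun i _ => ?_
  rcases eq_or_ne (a i) 0 with h | h
  · simp [h]
  · rw [hX i h]

namespace SamplePath

variable {n : ℕ} {GC GI : SimpleGraph (Fin n)} [DecidableRel GC.Adj] [DecidableRel GI.Adj]
  {α β δ : ℝ}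

theorem tsum_ite_coupleWeight_left (hα : α ∈ Set.Icc (0 : ℝ) 1) (hβ : β ∈ Set.Ioo (0 : ℝ) 1)
    (hδ : δ ∈ Set.Ioo (0 : ℝ) 1) (g : SamplePath n GC β δ) :
    ∀ x ≤ g.1 0, ∑' h : SamplePath n GC β δ,
      (if h.1 0 = x then ENNReal.ofReal (coupleWeight GI α h g) else 0)
        = ENNReal.ofReal g.benchWeight := by
  induction g using tail_induction with
  | base g hg =>
    intro x hx
    obtain rfl := eq_allSusc_of_le (hg ▸ hx)
    rw [tsum_ite_apply_zero_allSusc, coupleWeight_of_apply_zero hg, benchWeight_of_apply_zero hg]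
  | step g hg ih =>
    intro x hx
    rw [tsum_ite_apply_zero_eq_sum x (fun h => ENNReal.ofReal (coupleWeight GI α h g))
      (fun h => ENNReal.ofReal (coupleWeight GI α h g.tail))
      (fun s => ENNReal.ofReal (stateCouple n GC GI α β δ x (g.1 0) s (g.1 1)))
      (fun h hh => by
        rw [coupleWeight_of_ne hg, ENNReal.ofReal_mul (stateCouple_nonneg hα hβ hδ _ _ _ _), hh])
      (fun s hs => (Kbench_pos_of_stateCouple_ne_zero hα hβ hδ
        fun h0 => hs (by rw [h0, ENNReal.ofReal_zero])).1),
      sum_ofReal_mul_eq_of_ne_zero univ (fun s => stateCouple_nonneg hα hβ hδ x (g.1 0) s (g.1 1))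
        fun s hs => ih s (le_of_stateCouple_ne_zero hs),
      sum_stateCouple_left hx, ← ENNReal.ofReal_mul (Kbench_nonneg hβ hδ _ _),
      ← benchWeight_of_ne hg]

theorem tsum_ite_coupleWeight_right (hα : α ∈ Set.Icc (0 : ℝ) 1) (hβ : β ∈ Set.Ioo (0 : ℝ) 1)
    (hδ : δ ∈ Set.Ioo (0 : ℝ) 1) (h : SamplePath n GC β δ) :
    ∀ y, h.1 0 ≤ y → ∑' g : SamplePath n GC β δ,
      (if g.1 0 = y then ENNReal.ofReal (coupleWeight GI α h g) else 0)
        = ENNReal.ofReal (h.distWeight GI α) := by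
  induction h using tail_induction with
  | base h hh =>
    intro y _
    have hcw : ∀ g : SamplePath n GC β δ, coupleWeight GI α h g = g.benchWeight :=
      fun g => prod_congr rfl fun t _ => by
        rw [h.apply_eq_allSusc_of_le hh t.zero_le, h.apply_eq_allSusc_of_le hh (t + 1).zero_le,
          stateCouple_allSusc]
    simp_rw [hcw]
    rw [tsum_ite_benchWeight hβ hδ, distWeight_of_apply_zero hh, ENNReal.ofReal_one]
  | step h hh ih =>
    intro y hy
    have hy₀ : y ≠ allSusc n := fun hy₀ => hh (eq_allSusc_of_le (hy₀ ▸ hy))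
    rw [tsum_ite_apply_zero_eq_sum y (fun g => ENNReal.ofReal (coupleWeight GI α h g))
      (fun g => ENNReal.ofReal (coupleWeight GI α h.tail g))
      (fun s => ENNReal.ofReal (stateCouple n GC GI α β δ (h.1 0) y (h.1 1) s))
      (fun g hg => by
        rw [coupleWeight_of_ne (hg ▸ hy₀), ENNReal.ofReal_mul (stateCouple_nonneg hα hβ hδ _ _ _ _),
          hg])
      (fun s hs => (Kbench_pos_of_stateCouple_ne_zero hα hβ hδ
        fun h0 => hs (by rw [h0, ENNReal.ofReal_zero])).2),
      sum_ofReal_mul_eq_of_ne_zero univ (fun s => stateCouple_nonneg hα hβ hδ (h.1 0) y (h.1 1) s)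
        fun s hs => ih s (le_of_stateCouple_ne_zero hs),
      sum_stateCouple_right hy, ← ENNReal.ofReal_mul (Kdist_nonneg hα hβ hδ _ _),
      ← distWeight_of_ne hh]

end SamplePath

end Marginals

section PathLaws

open SamplePath

variable {n : ℕ} {GC GI : SimpleGraph (Fin n)} [DecidableRel GC.Adj] [DecidableRel GI.Adj]
  {α β δ : ℝ} {π : (Fin n → Bool) → ℝ}

theorem muPath_nonneg (hβ : β ∈ Set.Ioo (0 : ℝ) 1) (hδ : δ ∈ Set.Ioo (0 : ℝ) 1)
    (hπ₀ : ∀ s, 0 ≤ π s) (g : SamplePath n GC β δ) : 0 ≤ muPath n GC β δ π g :=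
  mul_nonneg (hπ₀ _) (prod_nonneg fun _ _ => Kbench_nonneg hβ hδ _ _)

theorem nuPath_nonneg (hα : α ∈ Set.Icc (0 : ℝ) 1) (hβ : β ∈ Set.Ioo (0 : ℝ) 1)
    (hδ : δ ∈ Set.Ioo (0 : ℝ) 1) (hπ₀ : ∀ s, 0 ≤ π s) (h : SamplePath n GC β δ) :
    0 ≤ nuPath n GC GI α β δ π h :=
  mul_nonneg (hπ₀ _) (prod_nonneg fun _ _ => Kdist_nonneg hα hβ hδ _ _)

theorem PhiPath_nonneg (hα : α ∈ Set.Icc (0 : ℝ) 1) (hβ : β ∈ Set.Ioo (0 : ℝ) 1)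
    (hδ : δ ∈ Set.Ioo (0 : ℝ) 1) (hπ₀ : ∀ s, 0 ≤ π s)
    (p : SamplePath n GC β δ × SamplePath n GC β δ) : 0 ≤ PhiPath n GC GI α β δ π p :=
  mul_nonneg (mul_nonneg (by split_ifs <;> norm_num) (hπ₀ _))
    (prod_nonneg fun _ _ => stateCouple_nonneg hα hβ hδ _ _ _ _)

theorem le_of_PhiPath_ne_zero {h g : SamplePath n GC β δ}
    (hne : PhiPath n GC GI α β δ π (h, g) ≠ 0) : h ≤ g := by
  have h₀ : h.1 0 = g.1 0 := by_contra fun h₀ => hne (by simp [PhiPath, h₀])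
  exact le_of_coupleWeight_ne_zero h₀.le (right_ne_zero_of_mul hne)

theorem ofReal_PhiPath (hπ₀ : ∀ s, 0 ≤ π s) (h g : SamplePath n GC β δ) :
    ENNReal.ofReal (PhiPath n GC GI α β δ π (h, g)) = if h.1 0 = g.1 0 then
      ENNReal.ofReal (π (h.1 0)) * ENNReal.ofReal (coupleWeight GI α h g) else 0 := by
  unfold PhiPath
  split_ifs
  · rw [one_mul, ENNReal.ofReal_mul (hπ₀ _)]
    rfl
  · simp

theorem tsum_ofReal_PhiPath_left (hα : α ∈ Set.Icc (0 : ℝ) 1) (hβ : β ∈ Set.Ioo (0 : ℝ) 1)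
    (hδ : δ ∈ Set.Ioo (0 : ℝ) 1) (hπ₀ : ∀ s, 0 ≤ π s) (g : SamplePath n GC β δ) :
    ∑' h, ENNReal.ofReal (PhiPath n GC GI α β δ π (h, g))
      = ENNReal.ofReal (muPath n GC β δ π g) := by
  calc ∑' h, ENNReal.ofReal (PhiPath n GC GI α β δ π (h, g))
      = ∑' h : SamplePath n GC β δ, ENNReal.ofReal (π (g.1 0)) *
          if h.1 0 = g.1 0 then ENNReal.ofReal (coupleWeight GI α h g) else 0 :=
        tsum_congr fun h => by rw [ofReal_PhiPath hπ₀]; split_ifs with h₀ <;> simp [h₀]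
    _ = ENNReal.ofReal (muPath n GC β δ π g) := by
        rw [ENNReal.tsum_mul_left, tsum_ite_coupleWeight_left hα hβ hδ g _ le_rfl, muPath,
          ENNReal.ofReal_mul (hπ₀ _)]
        rfl

theorem tsum_ofReal_PhiPath_right (hα : α ∈ Set.Icc (0 : ℝ) 1) (hβ : β ∈ Set.Ioo (0 : ℝ) 1)
    (hδ : δ ∈ Set.Ioo (0 : ℝ) 1) (hπ₀ : ∀ s, 0 ≤ π s) (h : SamplePath n GC β δ) :
    ∑' g, ENNReal.ofReal (PhiPath n GC GI α β δ π (h, g))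
      = ENNReal.ofReal (nuPath n GC GI α β δ π h) := by
  calc ∑' g, ENNReal.ofReal (PhiPath n GC GI α β δ π (h, g))
      = ∑' g : SamplePath n GC β δ, ENNReal.ofReal (π (h.1 0)) *
          if g.1 0 = h.1 0 then ENNReal.ofReal (coupleWeight GI α h g) else 0 :=
        tsum_congr fun g => by
          rw [ofReal_PhiPath hπ₀]
          rcases eq_or_ne (h.1 0) (g.1 0) with h₀ | h₀
          · simp [h₀]
          · simp [h₀, h₀.symm]
    _ = ENNReal.ofReal (nuPath n GC GI α β δ π h) := by
        rw [ENNReal.tsum_mul_left, tsum_ite_coupleWeight_right hα hβ hδ h _ le_rfl, nuPath,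
          ENNReal.ofReal_mul (hπ₀ _)]
        rfl

theorem tsum_ofReal_muPath (hβ : β ∈ Set.Ioo (0 : ℝ) 1) (hδ : δ ∈ Set.Ioo (0 : ℝ) 1)
    (hπ : IsPMF π) : ∑' g, ENNReal.ofReal (muPath n GC β δ π g) = 1 := by
  have hsplit : ∀ g : SamplePath n GC β δ, ENNReal.ofReal (muPath n GC β δ π g)
      = ∑ s, if g.1 0 = s then ENNReal.ofReal (π s) * ENNReal.ofReal g.benchWeight else 0 :=
    fun g => by
      rw [sum_ite_eq, if_pos (mem_univ _), muPath, ENNReal.ofReal_mul (hπ.1 _)]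
      rfl
  calc ∑' g, ENNReal.ofReal (muPath n GC β δ π g)
      = ∑ s, ENNReal.ofReal (π s) * ∑' g : SamplePath n GC β δ,
          (if g.1 0 = s then ENNReal.ofReal g.benchWeight else 0) := by
        rw [tsum_congr hsplit, Summable.tsum_finsetSum fun _ _ => ENNReal.summable]
        refine sum_congr rfl fun s _ => ?_
        rw [← ENNReal.tsum_mul_left]
        exact tsum_congr fun g => by split_ifs <;> simp
    _ = 1 := by
        simp_rw [tsum_ite_benchWeight hβ hδ, mul_one]
        rw [← ENNReal.ofReal_sum_of_nonneg fun s _ => hπ.1 s, (hasSum_fintype π).unique hπ.2,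
          ENNReal.ofReal_one]

end PathLaws

theorem benchmark_stochastically_dominates_distancing_general
    (n : ℕ) (GC GI : SimpleGraph (Fin n)) [DecidableRel GC.Adj] [DecidableRel GI.Adj]
    (α β δ : ℝ) (hα : α ∈ Set.Icc (0:ℝ) 1) (hβ : β ∈ Set.Ioo (0:ℝ) 1)
    (hδ : δ ∈ Set.Ioo (0:ℝ) 1)
    (π : (Fin n → Bool) → ℝ) (hπ : IsPMF π) :
    ∀ I : Set (SamplePath n GC β δ), IsUpperSet I →
      ((∑' g : I, muPath n GC β δ π g.1) - (∑' g : I, nuPath n GC GI α β δ π g.1) =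
        ∑' hg : ((Iᶜ ×ˢ I : Set (SamplePath n GC β δ × SamplePath n GC β δ))),
          PhiPath n GC GI α β δ π hg.1) ∧
      (0 ≤ ∑' hg : ((Iᶜ ×ˢ I : Set (SamplePath n GC β δ × SamplePath n GC β δ))),
          PhiPath n GC GI α β δ π hg.1) ∧
      (∑' g : I, nuPath n GC GI α β δ π g.1) ≤ (∑' g : I, muPath n GC β δ π g.1) := by
  intro I hI
  have hdiff : ∑' g : I, muPath n GC β δ π g.1 - ∑' g : I, nuPath n GC GI α β δ π g.1
      = ∑' x : ↥(Iᶜ ×ˢ I), PhiPath n GC GI α β δ π x.1 :=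
    tsum_upperSet_sub_eq_tsum_of_coupling (PhiPath_nonneg hα hβ hδ hπ.1)
      (muPath_nonneg hβ hδ hπ.1) (nuPath_nonneg hα hβ hδ hπ.1) (fun _ _ => le_of_PhiPath_ne_zero)
      (tsum_ofReal_PhiPath_left hα hβ hδ hπ.1) (tsum_ofReal_PhiPath_right hα hβ hδ hπ.1)
      (by rw [tsum_ofReal_muPath hβ hδ hπ]; exact ENNReal.one_ne_top) hI
  have hΦ : 0 ≤ ∑' x : ↥(Iᶜ ×ˢ I), PhiPath n GC GI α β δ π x.1 :=
    tsum_nonneg fun x => PhiPath_nonneg hα hβ hδ hπ.1 x.1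
  exact ⟨hdiff, hΦ, by linarith⟩

/-- for every pmf `π` on `Ω` and every upper set `I ⊆ Γ`,
`μ_π(I) − ν_π(I) = Φ_π(Iᶜ × I) ≥ 0`; in particular the benchmark sample-path law `μ_π`
stochastically dominates the distancing sample-path law `ν_π`. -/
theorem benchmark_stochastically_dominates_distancing
    (n : ℕ) (hn : 0 < n) (GC GI : SimpleGraph (Fin n)) [DecidableRel GC.Adj] [DecidableRel GI.Adj]
    (hGI : ∀ i, (GI.neighborFinset i).Nonempty)
    (α β δ : ℝ) (hα : α ∈ Set.Icc (0:ℝ) 1) (hβ : β ∈ Set.Ioo (0:ℝ) 1)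
    (hδ : δ ∈ Set.Ioo (0:ℝ) 1)
    (π : (Fin n → Bool) → ℝ) (hπ : IsPMF π) :
    ∀ I : Set (SamplePath n GC β δ), IsUpperSet I →
      ((∑' g : I, muPath n GC β δ π g.1) - (∑' g : I, nuPath n GC GI α β δ π g.1) =
        ∑' hg : ((Iᶜ ×ˢ I : Set (SamplePath n GC β δ × SamplePath n GC β δ))),
          PhiPath n GC GI α β δ π hg.1) ∧
      (0 ≤ ∑' hg : ((Iᶜ ×ˢ I : Set (SamplePath n GC β δ × SamplePath n GC β δ))),
          PhiPath n GC GI α β δ π hg.1) ∧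
      (∑' g : I, nuPath n GC GI α β δ π g.1) ≤ (∑' g : I, muPath n GC β δ π g.1) :=
  benchmark_stochastically_dominates_distancing_general n GC GI α β δ hα hβ hδ π hπ
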